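/- Strong duality for capped MGDA: let g_1, …, g_m ∈ ℝ^d and C ≥ 1/m. Then min over (d, α) ∈ ℝ^d × ℝ of [ α + C ∑_{k=1}^m max(0, ⟨-d, g_k⟩ - α) + (1/2)‖d‖² ] equals -(1/2) min { ‖∑_k λ_k g_k‖² : λ ∈ Δ, λ_k ≤ C ∀k }, and the optimal primal direction is d = ∑_k λ*_k g_k for the optimal dual λ*. -/

import Mathlib

open scoped RealInnerProductSpace
open Finset

/-!
By compactness the dual quadratic program has a minimiser `λ*` on the capped simplex `K`; put
`s = ∑ λ*ₖ gₖ`. First-order optimality of `‖·‖` on the convex set `{∑ λₖ gₖ | λ ∈ K}` gives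
`‖s‖² ≤ ⟪s, ∑ λₖ gₖ⟫`, i.e. `λ*` maximises the linear form `λ ↦ ∑ λₖ tₖ` with `tₖ = ⟪-s, gₖ⟫`
over `K`.

Weak duality: for `λ ∈ K` and any `α`, `∑ λₖ tₖ ≤ α + C ∑ (tₖ - α)₊`; combined with
`½‖d - s‖² ≥ 0` this bounds the primal objective below by `-½‖s‖²`. For the maximiser `λ*` and
`α = min {tₖ | λ*ₖ > 0}` the weak duality bound is an equality, because shifting mass towards a
larger `tₖ` would increase the linear form, so every `k` with `tₖ > α` is saturated at `C`. Hence
`(s, α)` attains `-½‖s‖²`.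
-/

def cappedSimplex (ι : Type*) [Fintype ι] (C : ℝ) : Set (ι → ℝ) :=
  stdSimplex ℝ ι ∩ Set.Iic fun _ ↦ C

section CappedSimplex

variable {ι : Type*} [Fintype ι] {C : ℝ}

theorem mem_cappedSimplex {l : ι → ℝ} :
    l ∈ cappedSimplex ι C ↔ (∀ k, 0 ≤ l k) ∧ ∑ k, l k = 1 ∧ ∀ k, l k ≤ C :=
  and_assoc

variable (ι C) in
theorem isCompact_cappedSimplex : IsCompact (cappedSimplex ι C) :=
  (isCompact_stdSimplex ℝ ι).inter_right isClosed_Iic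

variable (ι C) in
theorem convex_cappedSimplex : Convex ℝ (cappedSimplex ι C) :=
  (convex_stdSimplex ℝ ι).inter (convex_Iic _)

theorem cappedSimplex_nonempty (hι : 0 < Fintype.card ι) (hC : 1 / (Fintype.card ι : ℝ) ≤ C) :
    (cappedSimplex ι C).Nonempty := by
  have hcard : (0 : ℝ) < Fintype.card ι := by exact_mod_cast hι
  refine ⟨fun _ ↦ 1 / Fintype.card ι, mem_cappedSimplex.2 ⟨fun _ ↦ by positivity, ?_, fun _ ↦ hC⟩⟩
  simp [hcard.ne']

theorem dotProduct_le_add_mul_sum_max {l : ι → ℝ} (hl : l ∈ cappedSimplex ι C) (t : ι → ℝ)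
    (α : ℝ) : l ⬝ᵥ t ≤ α + C * ∑ k, max 0 (t k - α) := by
  obtain ⟨h0, h1, hC⟩ := mem_cappedSimplex.1 hl
  have hterm (k : ι) : l k * (t k - α) ≤ C * max 0 (t k - α) :=
    (mul_le_mul_of_nonneg_left (le_max_right _ _) (h0 k)).trans
      (mul_le_mul_of_nonneg_right (hC k) (le_max_left _ _))
  calc l ⬝ᵥ t = α + ∑ k, l k * (t k - α) := by
        simp only [dotProduct, mul_sub, sum_sub_distrib, ← sum_mul, h1]; ring
    _ ≤ α + C * ∑ k, max 0 (t k - α) := by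
        rw [mul_sum]; exact add_le_add_right (sum_le_sum fun k _ ↦ hterm k) α

theorem eq_of_isMaxOn_dotProduct {lam t : ι → ℝ} (hlam : lam ∈ cappedSimplex ι C)
    (hmax : IsMaxOn (· ⬝ᵥ t) (cappedSimplex ι C) lam) {j k : ι} (hj : 0 < lam j)
    (hjk : t j < t k) : lam k = C := by
  classical
  obtain ⟨h0, h1, hC⟩ := mem_cappedSimplex.1 hlam
  by_contra hkC
  have hk : lam k < C := (hC k).lt_of_ne hkC
  set ε := min (lam j) (C - lam k)
  have hε : 0 < ε := lt_min hj (sub_pos.2 hk)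
  have hεj : ε ≤ lam j := min_le_left _ _
  have hεk : ε ≤ C - lam k := min_le_right _ _
  set l' := lam + ε • (Pi.single k 1 - Pi.single j 1)
  have hl'_apply (i : ι) : l' i = lam i + (if i = k then ε else 0) - (if i = j then ε else 0) := by
    simp only [l', Pi.add_apply, Pi.smul_apply, Pi.sub_apply, Pi.single_apply, smul_eq_mul]
    split_ifs <;> ring
  have hl' : l' ∈ cappedSimplex ι C := by
    refine mem_cappedSimplex.2 ⟨fun i ↦ ?_, ?_, fun i ↦ ?_⟩
    · rw [hl'_apply]
      split_ifs <;> subst_vars <;> linarith [h0 i]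
    · simp [hl'_apply, sum_add_distrib, sum_sub_distrib, h1]
    · rw [hl'_apply]
      split_ifs <;> subst_vars <;> linarith [hC i]
  have hval : l' ⬝ᵥ t = lam ⬝ᵥ t + ε * (t k - t j) := by
    simp [l', add_dotProduct, smul_dotProduct, sub_dotProduct, single_dotProduct]
  have := hmax hl'
  simp only [Set.mem_ofPred_eq, hval] at this
  nlinarith

theorem exists_add_mul_sum_max_eq_dotProduct {lam t : ι → ℝ} (hlam : lam ∈ cappedSimplex ι C)
    (hmax : IsMaxOn (· ⬝ᵥ t) (cappedSimplex ι C) lam) :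
    ∃ α, α + C * ∑ k, max 0 (t k - α) = lam ⬝ᵥ t := by
  obtain ⟨h0, h1, -⟩ := mem_cappedSimplex.1 hlam
  have hsupp : (univ.filter fun i ↦ 0 < lam i).Nonempty := by
    obtain ⟨i, -, hi⟩ := exists_lt_of_sum_lt (s := univ) (f := 0) (g := lam) (by simp [h1])
    exact ⟨i, by simpa using hi⟩
  obtain ⟨j, hj, hjmin⟩ := exists_min_image _ t hsupp
  simp only [mem_filter, mem_univ, true_and] at hj hjmin
  refine ⟨t j, ?_⟩
  have hterm (k : ι) : C * max 0 (t k - t j) = lam k * (t k - t j) := by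
    rcases lt_trichotomy (t k) (t j) with h | h | h
    · have : lam k = 0 := (h0 k).antisymm' (not_lt.1 fun hk ↦ (hjmin k hk).not_gt h)
      simp [this, h.le]
    · simp [h]
    · rw [max_eq_right (sub_pos.2 h).le, eq_of_isMaxOn_dotProduct hlam hmax hj h]
  rw [mul_sum, sum_congr rfl fun k _ ↦ hterm k]
  simp only [dotProduct, mul_sub, sum_sub_distrib, ← sum_mul, h1]
  ring

end CappedSimplex

section InnerProduct

variable {E : Type*} [NormedAddCommGroup E] [InnerProductSpace ℝ E]

theorem norm_sq_le_inner_of_isMinOn_norm {S : Set E} (hS : Convex ℝ S) {s y : E} (hs : s ∈ S)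
    (hmin : IsMinOn (‖·‖) S s) (hy : y ∈ S) : ‖s‖ ^ 2 ≤ ⟪s, y⟫ := by
  have hbdd : BddBelow (Set.range fun w : S ↦ ‖0 - (w : E)‖) :=
    ⟨0, by rintro _ ⟨w, rfl⟩; positivity⟩
  have : Nonempty S := ⟨⟨s, hs⟩⟩
  have hinf : ‖0 - s‖ = ⨅ w : S, ‖0 - (w : E)‖ :=
    le_antisymm (le_ciInf fun w ↦ by simpa using hmin w.2) (ciInf_le hbdd ⟨s, hs⟩)
  have := (norm_eq_iInf_iff_real_inner_le_zero hS hs).1 hinf y hy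
  rw [zero_sub, inner_neg_left, inner_sub_right, real_inner_self_eq_norm_sq] at this
  linarith

variable {ι : Type*} [Fintype ι] (g : ι → E)

theorem dotProduct_inner (l : ι → ℝ) (x : E) :
    l ⬝ᵥ (fun k ↦ ⟪x, g k⟫) = ⟪x, ∑ k, l k • g k⟫ := by
  simp [dotProduct, inner_sum, real_inner_smul_right]

theorem isMaxOn_dotProduct_inner_of_isMinOn_norm {S : Set (ι → ℝ)} (hS : Convex ℝ S)
    {lam : ι → ℝ} (hlam : lam ∈ S) (hmin : IsMinOn (fun l ↦ ‖∑ k, l k • g k‖) S lam) :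
    IsMaxOn (· ⬝ᵥ fun k ↦ ⟪-∑ j, lam j • g j, g k⟫) S lam := by
  let A := Fintype.linearCombination ℝ g
  have hA (l : ι → ℝ) : A l = ∑ k, l k • g k := Fintype.linearCombination_apply ..
  have hmin' : IsMinOn (‖·‖) (A '' S) (A lam) := by
    rintro _ ⟨l, hl, rfl⟩
    simpa [hA] using hmin hl
  intro l hl
  have := norm_sq_le_inner_of_isMinOn_norm (hS.linear_image A) ⟨lam, hlam, rfl⟩ hmin' ⟨l, hl, rfl⟩
  rw [hA, hA] at this
  change l ⬝ᵥ _ ≤ lam ⬝ᵥ _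
  rw [dotProduct_inner, dotProduct_inner, inner_neg_left, inner_neg_left,
    real_inner_self_eq_norm_sq]
  linarith

end InnerProduct

section Objective

variable {E : Type*} [NormedAddCommGroup E] [InnerProductSpace ℝ E] {ι : Type*} [Fintype ι]

noncomputable def cappedMGDAObjective (g : ι → E) (C : ℝ) (d : E) (α : ℝ) : ℝ :=
  α + C * ∑ k, max 0 (⟪-d, g k⟫ - α) + (1 / 2) * ‖d‖ ^ 2

theorem neg_half_norm_sq_le_cappedMGDAObjective (g : ι → E) {C : ℝ} {lam : ι → ℝ}
    (hlam : lam ∈ cappedSimplex ι C) (d : E) (α : ℝ) :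
    -(1 / 2) * ‖∑ k, lam k • g k‖ ^ 2 ≤ cappedMGDAObjective g C d α := by
  have hdual := dotProduct_le_add_mul_sum_max hlam (fun k ↦ ⟪-d, g k⟫) α
  rw [dotProduct_inner, inner_neg_left] at hdual
  have hsq := norm_sub_sq_real d (∑ k, lam k • g k)
  unfold cappedMGDAObjective
  nlinarith [sq_nonneg ‖d - ∑ k, lam k • g k‖]

theorem cappedMGDAObjective_eq {g : ι → E} {C : ℝ} {lam : ι → ℝ} {α : ℝ}
    (hα : α + C * ∑ k, max 0 (⟪-∑ j, lam j • g j, g k⟫ - α) =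
      lam ⬝ᵥ fun k ↦ ⟪-∑ j, lam j • g j, g k⟫) :
    cappedMGDAObjective g C (∑ j, lam j • g j) α = -(1 / 2) * ‖∑ k, lam k • g k‖ ^ 2 := by
  rw [cappedMGDAObjective, hα, dotProduct_inner, inner_neg_left, real_inner_self_eq_norm_sq]
  ring

end Objective

/-- strong duality for capped MGDA. -/
theorem stmt12 {n m : ℕ} (hm : 0 < m) (g : Fin m → EuclideanSpace ℝ (Fin n))
    (C : ℝ) (hC : 1 / (m : ℝ) ≤ C) :
    ∃ lamstar : Fin m → ℝ,
      (∀ k, 0 ≤ lamstar k) ∧ (∑ k, lamstar k = 1) ∧ (∀ k, lamstar k ≤ C) ∧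
      -- λ* is optimal for the dual quadratic program:
      (∀ lam : Fin m → ℝ, (∀ k, 0 ≤ lam k) → (∑ k, lam k = 1) → (∀ k, lam k ≤ C) →
        ‖∑ k, lamstar k • g k‖ ^ 2 ≤ ‖∑ k, lam k • g k‖ ^ 2) ∧
      -- the primal optimal value equals minus half the dual optimal value:
      sInf {v : ℝ | ∃ (d : EuclideanSpace ℝ (Fin n)) (α : ℝ),
          v = α + C * ∑ k, max 0 (⟪-d, g k⟫ - α) + (1 / 2) * ‖d‖ ^ 2}
        = -(1 / 2) * ‖∑ k, lamstar k • g k‖ ^ 2 ∧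
      -- the optimal primal direction is d = ∑ λ*_k g_k:
      ∃ α : ℝ,
        α + C * ∑ k, max 0 (⟪-(∑ j, lamstar j • g j), g k⟫ - α)
          + (1 / 2) * ‖∑ j, lamstar j • g j‖ ^ 2
          = -(1 / 2) * ‖∑ k, lamstar k • g k‖ ^ 2 := by
  obtain ⟨lam, hlam, hmin⟩ := (isCompact_cappedSimplex (Fin m) C).exists_isMinOn
    (cappedSimplex_nonempty (by simpa using hm) (by simpa using hC))
    (by fun_prop : Continuous fun l : Fin m → ℝ ↦ ‖∑ k, l k • g k‖).continuousOn
  obtain ⟨α, hα⟩ := exists_add_mul_sum_max_eq_dotProduct hlam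
    (isMaxOn_dotProduct_inner_of_isMinOn_norm g (convex_cappedSimplex _ _) hlam hmin)
  have hopt := cappedMGDAObjective_eq hα
  obtain ⟨h0, h1, hcap⟩ := mem_cappedSimplex.1 hlam
  refine ⟨lam, h0, h1, hcap, fun l hl0 hl1 hl2 ↦ ?_,
    IsLeast.csInf_eq ⟨⟨_, α, hopt.symm⟩, ?_⟩, α, hopt⟩
  · exact pow_le_pow_left₀ (norm_nonneg _) (hmin (mem_cappedSimplex.2 ⟨hl0, hl1, hl2⟩)) 2
  · rintro _ ⟨d, β, rfl⟩
    exact neg_half_norm_sq_le_cappedMGDAObjective g hlam d β
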